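/- Let D be a simplicial triangulated 2-disc and let α be a path contained in the boundary ∂D that is a geodesic in the 1-skeleton of D. Then the sum over interior vertices v of α (vertices of α other than its endpoints) of the boundary curvatures κ_∂(v) = 3 − ∠(v) is at most 1. -/

import Mathlib

universe u

namespace ASC

variable {V : Type u} [DecidableEq V]

/-- Triangulated 2-discs, encoded inductively via shellings: a disc together with its
boundary cycle (recorded as a list of vertices, up to cyclic rotation) is either a single
2-simplex, or is obtained from a smaller disc by attaching a triangle along one boundary
edge (introducing a fresh vertex) or along two consecutive boundary edges. -/
inductive IsDiscWithBoundary : Finset (Finset V) → List V → Prop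
  | triangle (a b c : V) (hab : a ≠ b) (hac : a ≠ c) (hbc : b ≠ c) :
      IsDiscWithBoundary
        ({{a}, {b}, {c}, {a, b}, {a, c}, {b, c}, {a, b, c}} : Finset (Finset V)) [a, b, c]
  | rotate (F : Finset (Finset V)) (l₁ l₂ : List V) :
      IsDiscWithBoundary F (l₁ ++ l₂) → IsDiscWithBoundary F (l₂ ++ l₁)
  | glue_vertex (F : Finset (Finset V)) (a b d : V) (rest : List V) :
      IsDiscWithBoundary F (a :: b :: rest) →
      (∀ s ∈ F, d ∉ s) →
      IsDiscWithBoundary (F ∪ ({{d}, {a, d}, {b, d}, {a, b, d}} : Finset (Finset V)))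
        (a :: d :: b :: rest)
  | glue_edge (F : Finset (Finset V)) (a b c : V) (rest : List V) :
      IsDiscWithBoundary F (a :: b :: c :: rest) →
      rest ≠ [] → a ≠ c → ({a, c} : Finset V) ∉ F →
      IsDiscWithBoundary (F ∪ ({{a, c}, {a, b, c}} : Finset (Finset V))) (a :: c :: rest)

/-- The number of triangles of `F` containing the vertex `v`. -/
def angle (F : Finset (Finset V)) (v : V) : ℕ :=
  (F.filter fun s => s.card = 3 ∧ v ∈ s).card

/-- The vertex set of a finite complex. -/
def verts (F : Finset (Finset V)) : Finset V := F.sup id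

/-- The 1-skeleton of a finite complex. -/
def graphOf (F : Finset (Finset V)) : SimpleGraph V where
  Adj u v := u ≠ v ∧ ({u, v} : Finset V) ∈ F
  symm := by
    constructor
    intro u v h
    exact ⟨h.1.symm, by rw [Finset.pair_comm]; exact h.2⟩
  loopless := ⟨fun v h => h.1 rfl⟩

end ASC

/-!
Every disc produced by the shelling moves has a fan structure along its boundary: the boundary
is a simple cycle of length at least three, each boundary edge lies in exactly one triangle, and
the triangles at a boundary vertex `v` with boundary neighbours `p`, `q` form a walk from `p` to
`q` of length `∠(v)` in the link of `v`. Each gluing move preserves this structure: the new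
triangle lengthens the fans at the two ends of the glued boundary arc by one edge.

Along a boundary geodesic `α₀ … αₙ` every interior vertex has `∠ ≥ 2`: otherwise its fan joins
its two neighbours on `α` by a walk of length at most one, which shortcuts `α`. Now walk from `α₀`
to the apex of the triangle on `α₀α₁`, then around the fan of each interior vertex `αᵢ` in
`∠(αᵢ) - 2` steps (the last triangle of the fan at `αᵢ` and the first one at `αᵢ₊₁` both contain
the boundary edge `αᵢαᵢ₊₁`, hence coincide), and finally to `αₙ`. This walk has length
`2 + ∑ (∠(αᵢ) - 2) ≥ n`, so `∑ (3 - ∠(αᵢ)) = n - 1 - ∑ (∠(αᵢ) - 2) ≤ 1`.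
-/

theorem SimpleGraph.exists_walk_of_adj_succ {W : Type*} {G : SimpleGraph W} {f : ℕ → W} {n : ℕ}
    (hf : ∀ i < n, G.Adj (f i) (f (i + 1))) {i j : ℕ} (hij : i ≤ j) (hjn : j ≤ n) :
    ∃ w : G.Walk (f i) (f j), w.length = j - i := by
  induction j, hij using Nat.le_induction with
  | base => exact ⟨.nil, by simp⟩
  | succ j hij ih =>
    obtain ⟨w, hw⟩ := ih (by omega)
    exact ⟨w.concat (hf j (by omega)), by simp [hw]; omega⟩

theorem SimpleGraph.Walk.exists_adj_adj_of_two_le_length {W : Type*} {G : SimpleGraph W}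
    {p q : W} (w : G.Walk p q) (hw : 2 ≤ w.length) :
    ∃ u z, G.Adj p u ∧ G.Adj z q ∧ ∃ w' : G.Walk u z, w'.length + 2 = w.length := by
  cases w with
  | nil => simp at hw
  | cons h w₁ =>
    simp only [SimpleGraph.Walk.length_cons] at hw
    have hnil : ¬ w₁.Nil := by
      rw [← SimpleGraph.Walk.length_eq_zero_iff]
      omega
    refine ⟨_, _, h, w₁.adj_penultimate hnil, w₁.dropLast, ?_⟩
    simp only [SimpleGraph.Walk.length_dropLast, SimpleGraph.Walk.length_cons]
    omega

namespace ASC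

section CyclicSucc

variable {X : Type*} {l l' : List X} {a b c d x y z p q u v : X}

def IsCyclicSucc (l : List X) (u v : X) : Prop := ∃ t, l ~r u :: v :: t

theorem IsCyclicSucc.of_isRotated (hl : l ~r l') (h : IsCyclicSucc l' u v) :
    IsCyclicSucc l u v :=
  let ⟨t, ht⟩ := h
  ⟨t, hl.trans ht⟩

theorem IsCyclicSucc.of_infix (h : [u, v] <:+: l) : IsCyclicSucc l u v := by
  obtain ⟨s, t, rfl⟩ := h
  exact ⟨t ++ s, by simpa using List.isRotated_append (l := s) (l' := u :: v :: t)⟩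

theorem IsCyclicSucc.infix_append_take_one (h : IsCyclicSucc l u v) :
    [u, v] <:+: l ++ l.take 1 := by
  obtain ⟨t, ht⟩ := h
  obtain ⟨n, hn, hrot⟩ := List.isRotated_iff_mod.1 ht.symm
  rw [← hrot, List.rotate_eq_drop_append_take hn]
  rcases n with _ | _ | k
  · simpa using List.infix_append [] [u, v] (t ++ [u])
  · simpa using List.infix_append (v :: t) [u, v] []
  · simpa using List.infix_append (t.drop k) [u, v] (t.take k ++ _)

theorem isCyclicSucc_cons_cons_iff :
    IsCyclicSucc (a :: x :: l) u v ↔ (u = a ∧ v = x) ∨ [u, v] <:+: x :: l ++ [a] := by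
  constructor
  · intro h
    have h' := h.infix_append_take_one
    simp only [List.take_succ_cons, List.take_zero, List.cons_append] at h'
    rcases List.infix_cons_iff.1 h' with h' | h'
    · simp_all
    · exact Or.inr (by simpa using h')
  · rintro (⟨rfl, rfl⟩ | h)
    · exact .of_infix (List.prefix_append [u, v] l).isInfix
    · refine (IsCyclicSucc.of_infix h).of_isRotated ?_
      simpa using List.IsRotated.cons_append_singleton (a := a) (l := x :: l)

theorem IsCyclicSucc.cons_cons_cons_cases (h : IsCyclicSucc (a :: d :: b :: l) u v) :
    (u = a ∧ v = d) ∨ (u = d ∧ v = b) ∨ [u, v] <:+: b :: l ++ [a] := by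
  rcases isCyclicSucc_cons_cons_iff.1 h with h | h
  · exact Or.inl h
  rcases List.infix_cons_iff.1 h with h | h
  · exact Or.inr (Or.inl (by simpa using h))
  · exact Or.inr (Or.inr h)

theorem isCyclicSucc_triple_iff :
    IsCyclicSucc [a, b, c] u v ↔ (u = a ∧ v = b) ∨ (u = b ∧ v = c) ∨ (u = c ∧ v = a) := by
  simp [isCyclicSucc_cons_cons_iff, List.infix_cons_iff]

theorem isCyclicSucc_of_map_range_prefix {f : ℕ → X} {n i : ℕ}
    (h : (List.range (n + 1)).map f <+: l) (hi : i < n) : IsCyclicSucc l (f i) (f (i + 1)) := by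
  induction n with
  | zero => omega
  | succ n ih =>
    rcases Nat.lt_succ_iff_lt_or_eq.1 hi with hi | rfl
    · exact ih ((by simp [List.range_succ] : _ <+: _).trans h) hi
    · refine .of_infix (List.IsInfix.trans ?_ h.isInfix)
      simpa [List.range_succ] using
        List.infix_append ((List.range i).map f) [f i, f (i + 1)] []

theorem IsCyclicSucc.cons_cons_pair_cases (hac : a ≠ c)
    (h₁ : IsCyclicSucc (a :: c :: l) p v) (h₂ : IsCyclicSucc (a :: c :: l) v q) :
    (p = a ∧ v = c ∧ [c, q] <:+: c :: l ++ [a]) ∨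
      (v = a ∧ q = c ∧ [p, a] <:+: c :: l ++ [a]) ∨
      ([p, v] <:+: c :: l ++ [a] ∧ [v, q] <:+: c :: l ++ [a]) := by
  rcases isCyclicSucc_cons_cons_iff.1 h₁ with ⟨hp, hv⟩ | h₁ <;>
    rcases isCyclicSucc_cons_cons_iff.1 h₂ with ⟨hv', hq⟩ | h₂
  · exact absurd (hv ▸ hv') hac.symm
  · subst p v
    exact Or.inl ⟨rfl, rfl, h₂⟩
  · subst v q
    exact Or.inr (Or.inl ⟨rfl, rfl, h₁⟩)
  · exact Or.inr (Or.inr ⟨h₁, h₂⟩)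

theorem IsCyclicSucc.cons_cons_cons_pair_cases (hl : (a :: d :: b :: l).Nodup)
    (h₁ : IsCyclicSucc (a :: d :: b :: l) p v) (h₂ : IsCyclicSucc (a :: d :: b :: l) v q) :
    (p = a ∧ v = d ∧ q = b) ∨ (p = d ∧ v = b ∧ [b, q] <:+: b :: l ++ [a]) ∨
      (v = a ∧ q = d ∧ [p, a] <:+: b :: l ++ [a]) ∨
      ([p, v] <:+: b :: l ++ [a] ∧ [v, q] <:+: b :: l ++ [a]) := by
  have hd : d ∉ b :: l ++ [a] := by simp at hl ⊢; tauto
  have hab : a ≠ b := by simp at hl; tauto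
  have had : a ≠ d := by simp at hl; tauto
  have hbd : b ≠ d := by simp at hl; tauto
  rcases h₁.cons_cons_cons_cases with ⟨hp, hv⟩ | ⟨hp, hv⟩ | h₁
  · subst p v
    rcases h₂.cons_cons_cons_cases with ⟨h, -⟩ | ⟨-, hq⟩ | h₂
    · exact absurd h had.symm
    · exact Or.inl ⟨rfl, rfl, hq⟩
    · exact absurd (h₂.subset (by simp)) hd
  · subst p v
    rcases h₂.cons_cons_cons_cases with ⟨h, -⟩ | ⟨h, -⟩ | h₂
    · exact absurd h hab.symm
    · exact absurd h hbd
    · exact Or.inr (Or.inl ⟨rfl, rfl, h₂⟩)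
  · rcases h₂.cons_cons_cons_cases with ⟨hv, hq⟩ | ⟨hv, -⟩ | h₂
    · subst v q
      exact Or.inr (Or.inr (Or.inl ⟨rfl, rfl, h₁⟩))
    · exact absurd (hv ▸ h₁.subset (by simp)) hd
    · exact Or.inr (Or.inr (Or.inr ⟨h₁, h₂⟩))

theorem ne_head_of_pair_infix (hl : (x :: l).Nodup) (h : [u, v] <:+: x :: l) : v ≠ x := by
  have hv : v ∈ l := by
    rcases List.infix_cons_iff.1 h with h | h
    · exact (List.cons_prefix_cons.1 h).2.subset (by simp)
    · exact h.subset (by simp)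
  rintro rfl
  exact (List.nodup_cons.1 hl).1 hv

theorem ne_last_of_pair_infix (hl : (l ++ [y]).Nodup) (h : [u, v] <:+: l ++ [y]) : u ≠ y := by
  have h' : [v, u] <:+: y :: l.reverse := by simpa using List.reverse_infix.2 h
  exact ne_head_of_pair_infix (by simpa using List.nodup_reverse.2 hl) h'

theorem not_head_last_pair_infix (hl : (x :: l ++ [y]).Nodup) (hne : l ≠ []) :
    ¬ [x, y] <:+: x :: l ++ [y] := by
  intro h
  rcases List.infix_cons_iff.1 h with h | h
  · obtain ⟨z, l', rfl⟩ := List.exists_cons_of_ne_nil hne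
    simp only [List.cons_prefix_cons, true_and] at h
    obtain rfl := (List.cons_prefix_cons.1 h).1
    simp at hl
  · have := h.subset (by simp : x ∈ [x, y])
    simp at hl this
    tauto

variable [DecidableEq X]

theorem notMem_of_pair_infix_of_pair_infix (hl : (x :: l ++ [y]).Nodup)
    (h₁ : [p, v] <:+: x :: l ++ [y]) (h₂ : [v, q] <:+: x :: l ++ [y])
    (hz : z ∉ x :: l ++ [y]) : v ∉ ({x, y, z} : Finset X) := by
  have hx := ne_head_of_pair_infix hl h₁
  have hy := ne_last_of_pair_infix (by simpa using hl) h₂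
  have hvz : v ≠ z := fun h => hz (h ▸ h₁.subset (by simp))
  simp [hx, hy, hvz]

theorem not_and_mem_of_pair_infix (hl : (x :: l ++ [y]).Nodup) (hne : l ≠ [])
    (h : [u, v] <:+: x :: l ++ [y]) (hz : z ∉ x :: l ++ [y]) :
    ¬ (u ∈ ({x, y, z} : Finset X) ∧ v ∈ ({x, y, z} : Finset X)) := by
  have hu := ne_last_of_pair_infix (by simpa using hl) h
  have hv := ne_head_of_pair_infix hl h
  have huz : u ≠ z := fun h' => hz (h' ▸ h.subset (by simp))
  have hvz : v ≠ z := fun h' => hz (h' ▸ h.subset (by simp))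
  simp only [Finset.mem_insert, Finset.mem_singleton, hu, hv, huz, hvz, or_false, false_or]
  rintro ⟨rfl, rfl⟩
  exact not_head_last_pair_infix hl hne h

end CyclicSucc

section Triangles

variable {V : Type u} {F F' : Finset (Finset V)} {T : Finset V} {u v : V}

def IsTriangle (F : Finset (Finset V)) (t : Finset V) : Prop := t ∈ F ∧ t.card = 3

structure IsTriangleExtension (F F' : Finset (Finset V)) (T : Finset V) : Prop where
  subset : F ⊆ F'
  isTriangle_iff : ∀ t, IsTriangle F' t ↔ IsTriangle F t ∨ t = T
  notMem : T ∉ F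

namespace IsTriangleExtension

theorem isTriangle (hE : IsTriangleExtension F F' T) : IsTriangle F' T :=
  (hE.isTriangle_iff T).2 (Or.inr rfl)

theorem subsingleton_of_not_and_mem (hE : IsTriangleExtension F F' T)
    (h : {t | IsTriangle F t ∧ u ∈ t ∧ v ∈ t}.Subsingleton) (huv : ¬ (u ∈ T ∧ v ∈ T)) :
    {t | IsTriangle F' t ∧ u ∈ t ∧ v ∈ t}.Subsingleton := by
  refine h.anti fun t ⟨ht, hu, hv⟩ => ⟨?_, hu, hv⟩
  rcases (hE.isTriangle_iff t).1 ht with ht | rfl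
  · exact ht
  · exact absurd ⟨hu, hv⟩ huv

theorem subsingleton_of_forall_not (hE : IsTriangleExtension F F' T)
    (h : ∀ t, IsTriangle F t → u ∈ t → v ∈ t → False) :
    {t | IsTriangle F' t ∧ u ∈ t ∧ v ∈ t}.Subsingleton := by
  refine (Set.subsingleton_singleton (a := T)).anti fun t ⟨ht, hu, hv⟩ => ?_
  rcases (hE.isTriangle_iff t).1 ht with ht | rfl
  · exact (h t ht hu hv).elim
  · rfl

end IsTriangleExtension

variable [DecidableEq V] {a b c p q x y : V}

theorem ne_of_card_eq_three (h : ({a, b, c} : Finset V).card = 3) :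
    a ≠ b ∧ a ≠ c ∧ b ≠ c := by
  have hle : ∀ x y : V, ({x, y} : Finset V).card ≤ 2 := fun _ _ => Finset.card_le_two
  refine ⟨fun hab => ?_, fun hac => ?_, fun hbc => ?_⟩
  · subst hab; simp at h; linarith [hle a c]
  · subst hac; simp at h; linarith [hle b a]
  · subst hbc; simp at h; linarith [hle a b]

theorem mem_verts : v ∈ verts F ↔ ∃ s ∈ F, v ∈ s := by
  simp [verts, Finset.mem_sup]

theorem verts_mono (h : F ⊆ F') : verts F ⊆ verts F' :=
  Finset.sup_mono h

theorem graphOf_mono (h : F ⊆ F') : graphOf F ≤ graphOf F' :=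
  fun _ _ huv => ⟨huv.1, h huv.2⟩

theorem pair_mem_of_mem_triple (hab : ({a, b} : Finset V) ∈ F)
    (hac : ({a, c} : Finset V) ∈ F) (hbc : ({b, c} : Finset V) ∈ F) :
    ∀ x ∈ ({a, b, c} : Finset V), ∀ y ∈ ({a, b, c} : Finset V), x ≠ y →
      ({x, y} : Finset V) ∈ F := by
  simp only [Finset.mem_insert, Finset.mem_singleton]
  rintro x (rfl | rfl | rfl) y (rfl | rfl | rfl) hxy <;> simp_all [Finset.pair_comm]

theorem isTriangleExtension_union {S : Finset (Finset V)} (hS : ∀ s ∈ S, s.card = 3 → s = T)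
    (hTS : T ∈ S) (hT : T.card = 3) (hTF : T ∉ F) : IsTriangleExtension F (F ∪ S) T where
  subset := Finset.subset_union_left
  isTriangle_iff t := by
    simp only [IsTriangle, Finset.mem_union]
    constructor
    · rintro ⟨hF | hS', h3⟩
      · exact Or.inl ⟨hF, h3⟩
      · exact Or.inr (hS t hS' h3)
    · rintro (⟨hF, h3⟩ | rfl)
      · exact ⟨Or.inl hF, h3⟩
      · exact ⟨Or.inr hTS, hT⟩
  notMem := hTF

theorem IsTriangleExtension.angle_eq (hE : IsTriangleExtension F F' T) (v : V) :
    angle F' v = angle F v + if v ∈ T then 1 else 0 := by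
  have hfilter : F'.filter (fun s => s.card = 3 ∧ v ∈ s) =
      if v ∈ T then insert T (F.filter fun s => s.card = 3 ∧ v ∈ s)
      else F.filter fun s => s.card = 3 ∧ v ∈ s := by
    ext s
    have := hE.isTriangle_iff s
    simp only [IsTriangle] at this
    split_ifs with hv <;> simp only [Finset.mem_filter, Finset.mem_insert] <;> aesop
  unfold angle
  rw [hfilter]
  split_ifs
  · rw [Finset.card_insert_of_notMem (by simp [hE.notMem])]
  · rfl

def linkGraph (F : Finset (Finset V)) (v : V) : SimpleGraph V where
  Adj x y := IsTriangle F {v, x, y}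
  symm := ⟨fun x y h => by rwa [Finset.pair_comm]⟩
  loopless := ⟨fun x h => (ne_of_card_eq_three h.2).2.2 rfl⟩

theorem linkGraph_adj : (linkGraph F v).Adj x y ↔ IsTriangle F {v, x, y} := Iff.rfl

theorem linkGraph_mono (h : F ⊆ F') (v : V) : linkGraph F v ≤ linkGraph F' v :=
  fun _ _ hxy => ⟨h hxy.1, hxy.2⟩

/-- In a disc, the link of a boundary vertex `v` is a path between its two boundary neighbours
with one edge per triangle at `v`; a walk of that length is all the argument needs. -/
def HasFan (F : Finset (Finset V)) (v p q : V) : Prop :=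
  ∃ w : (linkGraph F v).Walk p q, w.length = angle F v

theorem hasFan_self_of_forall_notMem (hv : ∀ s ∈ F, v ∉ s) (p : V) : HasFan F v p p :=
  ⟨.nil, (Finset.card_eq_zero.2 (Finset.filter_eq_empty_iff.2 fun s hs h => hv s hs h.2)).symm⟩

theorem hasFan_of_angle_eq_one (h : IsTriangle F {v, p, q}) (hv : angle F v = 1) :
    HasFan F v p q :=
  ⟨.cons (linkGraph_adj.2 h) .nil, by simp [hv]⟩

namespace IsTriangleExtension

theorem hasFan_of_notMem (hE : IsTriangleExtension F F' T) (h : HasFan F v p q) (hv : v ∉ T) :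
    HasFan F' v p q := by
  obtain ⟨w, hw⟩ := h
  exact ⟨w.mapLe (linkGraph_mono hE.subset v), by simp [hw, hE.angle_eq, hv]⟩

theorem hasFan_concat (hE : IsTriangleExtension F F' T) (h : HasFan F v p x)
    (hT : T = {v, x, y}) : HasFan F' v p y := by
  obtain ⟨w, hw⟩ := h
  have hxy : (linkGraph F' v).Adj x y := linkGraph_adj.2 (hT ▸ hE.isTriangle)
  exact ⟨(w.mapLe (linkGraph_mono hE.subset v)).concat hxy, by simp [hw, hE.angle_eq, hT]⟩

theorem hasFan_cons (hE : IsTriangleExtension F F' T) (h : HasFan F v y q)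
    (hT : T = {v, x, y}) : HasFan F' v x q := by
  obtain ⟨w, hw⟩ := h
  have hxy : (linkGraph F' v).Adj x y := linkGraph_adj.2 (hT ▸ hE.isTriangle)
  exact ⟨.cons hxy (w.mapLe (linkGraph_mono hE.subset v)), by simp [hw, hE.angle_eq, hT]⟩

end IsTriangleExtension

end Triangles

section BoundaryCycle

variable {V : Type u} [DecidableEq V] {F : Finset (Finset V)} {bd : List V}

structure IsBoundaryCycle (F : Finset (Finset V)) (bd : List V) : Prop where
  nodup : bd.Nodup
  three_le_length : 3 ≤ bd.length
  subset_verts : ∀ v ∈ bd, v ∈ verts F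
  pair_mem : ∀ t, IsTriangle F t → ∀ x ∈ t, ∀ y ∈ t, x ≠ y → ({x, y} : Finset V) ∈ F
  adj : ∀ u v, IsCyclicSucc bd u v → (graphOf F).Adj u v
  subsingleton : ∀ u v, IsCyclicSucc bd u v →
    {t | IsTriangle F t ∧ u ∈ t ∧ v ∈ t}.Subsingleton
  hasFan : ∀ p v q, IsCyclicSucc bd p v → IsCyclicSucc bd v q → HasFan F v p q

theorem IsBoundaryCycle.of_isRotated {bd' : List V} (h : IsBoundaryCycle F bd)
    (hbd : bd ~r bd') : IsBoundaryCycle F bd' where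
  nodup := hbd.nodup_iff.1 h.nodup
  three_le_length := hbd.perm.length_eq ▸ h.three_le_length
  subset_verts v hv := h.subset_verts v (hbd.mem_iff.2 hv)
  pair_mem := h.pair_mem
  adj u v huv := h.adj u v (huv.of_isRotated hbd)
  subsingleton u v huv := h.subsingleton u v (huv.of_isRotated hbd)
  hasFan p v q hpv hvq := h.hasFan p v q (hpv.of_isRotated hbd) (hvq.of_isRotated hbd)

theorem isTriangle_triangle_iff {a b c : V} (hab : a ≠ b) (hac : a ≠ c) (hbc : b ≠ c)
    {t : Finset V} :
    IsTriangle {{a}, {b}, {c}, {a, b}, {a, c}, {b, c}, {a, b, c}} t ↔ t = {a, b, c} := by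
  constructor
  · rintro ⟨ht, h3⟩
    simp only [Finset.mem_insert, Finset.mem_singleton] at ht
    rcases ht with rfl | rfl | rfl | rfl | rfl | rfl | rfl <;> simp_all
  · rintro rfl
    exact ⟨by simp, Finset.card_eq_three.2 ⟨a, b, c, hab, hac, hbc, rfl⟩⟩

theorem isBoundaryCycle_triangle {a b c : V} (hab : a ≠ b) (hac : a ≠ c) (hbc : b ≠ c) :
    IsBoundaryCycle {{a}, {b}, {c}, {a, b}, {a, c}, {b, c}, {a, b, c}} [a, b, c] := by
  set F₀ : Finset (Finset V) := {{a}, {b}, {c}, {a, b}, {a, c}, {b, c}, {a, b, c}}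
  have htri := fun t => isTriangle_triangle_iff (t := t) hab hac hbc
  have hpair : ∀ x ∈ ({a, b, c} : Finset V), ∀ y ∈ ({a, b, c} : Finset V), x ≠ y →
      ({x, y} : Finset V) ∈ F₀ :=
    pair_mem_of_mem_triple (by simp [F₀]) (by simp [F₀]) (by simp [F₀])
  have hangle : ∀ v ∈ ({a, b, c} : Finset V), angle F₀ v = 1 := by
    intro v hv
    refine Finset.card_eq_one.2 ⟨{a, b, c}, Finset.ext fun t => ?_⟩
    have := htri t
    simp only [IsTriangle] at this
    simp only [Finset.mem_filter, Finset.mem_singleton]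
    aesop
  have hfan : ∀ p v q, ({v, p, q} : Finset V) = {a, b, c} → HasFan F₀ v p q :=
    fun p v q h => hasFan_of_angle_eq_one ((htri _).2 h) (hangle v (h ▸ by simp))
  refine ⟨by simp [hab, hac, hbc], by simp,
    fun v hv => mem_verts.2 ⟨{a, b, c}, by simp [F₀], by simpa using hv⟩,
    fun t ht => (htri t).1 ht ▸ hpair, fun u v huv => ?_,
    fun u v _ => Set.subsingleton_singleton.anti fun t ht => (htri t).1 ht.1,
    fun p v q hpv hvq => ?_⟩
  · rw [isCyclicSucc_triple_iff] at huv
    rcases huv with ⟨rfl, rfl⟩ | ⟨rfl, rfl⟩ | ⟨rfl, rfl⟩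
    · exact ⟨hab, hpair _ (by simp) _ (by simp) hab⟩
    · exact ⟨hbc, hpair _ (by simp) _ (by simp) hbc⟩
    · exact ⟨hac.symm, hpair _ (by simp) _ (by simp) hac.symm⟩
  · rw [isCyclicSucc_triple_iff] at hpv hvq
    rcases hpv with ⟨rfl, rfl⟩ | ⟨rfl, rfl⟩ | ⟨rfl, rfl⟩ <;>
      rcases hvq with ⟨h, rfl⟩ | ⟨h, rfl⟩ | ⟨h, rfl⟩ <;>
      first
        | exact absurd h ‹_›
        | exact absurd h.symm ‹_›
        | exact hfan _ _ _ (by ext; simp; tauto)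

theorem IsBoundaryCycle.notMem_of_forall_notMem {d : V} (h : IsBoundaryCycle F bd)
    (hd : ∀ s ∈ F, d ∉ s) : d ∉ bd := fun hmem => by
  obtain ⟨s, hs, hds⟩ := mem_verts.1 (h.subset_verts d hmem)
  exact hd s hs hds

theorem isTriangleExtension_glue_vertex {a b d : V} (hab : a ≠ b) (had : a ≠ d) (hbd : b ≠ d)
    (hd : ∀ s ∈ F, d ∉ s) :
    IsTriangleExtension F (F ∪ {{d}, {a, d}, {b, d}, {a, b, d}}) {a, b, d} := by
  refine isTriangleExtension_union ?_ (by simp)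
    (Finset.card_eq_three.2 ⟨a, b, d, hab, had, hbd, rfl⟩) (fun hT => hd _ hT (by simp))
  simp only [Finset.mem_insert, Finset.mem_singleton]
  rintro s (rfl | rfl | rfl | rfl) h3 <;> simp_all

theorem IsBoundaryCycle.glue_vertex {a b d : V} {rest : List V}
    (h : IsBoundaryCycle F (a :: b :: rest)) (hd : ∀ s ∈ F, d ∉ s) :
    IsBoundaryCycle (F ∪ {{d}, {a, d}, {b, d}, {a, b, d}}) (a :: d :: b :: rest) := by
  set F' : Finset (Finset V) := F ∪ {{d}, {a, d}, {b, d}, {a, b, d}}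
  have hdO := h.notMem_of_forall_notMem hd
  have hN : (a :: d :: b :: rest).Nodup := by
    have hnd := h.nodup
    simp only [List.nodup_cons, List.mem_cons, not_or] at hnd hdO ⊢
    tauto
  obtain ⟨had, hab, hbd⟩ : a ≠ d ∧ a ≠ b ∧ b ≠ d := by simp at hN; tauto
  have hE : IsTriangleExtension F F' {a, b, d} := isTriangleExtension_glue_vertex hab had hbd hd
  -- the arc `b :: rest ++ [a]` is shared by the old and the new boundary cycle
  have hpath : (b :: rest ++ [a]).Nodup :=
    (List.IsRotated.cons_append_singleton (a := a) (l := b :: rest)).nodup_iff.1 h.nodup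
  have hdpath : d ∉ b :: rest ++ [a] := by simp at hdO ⊢; tauto
  have hold : ∀ u v, [u, v] <:+: b :: rest ++ [a] → IsCyclicSucc (a :: b :: rest) u v :=
    fun u v huv => isCyclicSucc_cons_cons_iff.2 (Or.inr huv)
  have hab' : IsCyclicSucc (a :: b :: rest) a b := isCyclicSucc_cons_cons_iff.2 (.inl ⟨rfl, rfl⟩)
  have hrest : rest ≠ [] := by rintro rfl; simpa using h.three_le_length
  have hT : ({a, b, d} : Finset V) = {b, a, d} := Finset.insert_comm _ _ _
  refine ⟨hN, by simp, fun v hv => ?_, fun t ht => ?_, fun u v huv => ?_, fun u v huv => ?_,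
    fun p v q hpv hvq => ?_⟩
  · by_cases hvd : v = d
    · exact mem_verts.2 ⟨{d}, by simp [F'], by simp [hvd]⟩
    · exact verts_mono hE.subset (h.subset_verts v (by simp [hvd] at hv ⊢; tauto))
  · rcases (hE.isTriangle_iff t).1 ht with ht | rfl
    · exact fun x hx y hy hxy => hE.subset (h.pair_mem t ht x hx y hy hxy)
    · exact pair_mem_of_mem_triple (hE.subset (h.adj a b hab').2) (by simp [F']) (by simp [F'])
  · rcases huv.cons_cons_cons_cases with ⟨rfl, rfl⟩ | ⟨rfl, rfl⟩ | huv
    · exact ⟨had, by simp [F']⟩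
    · exact ⟨hbd.symm, by simp [F', Finset.pair_comm]⟩
    · exact graphOf_mono hE.subset (h.adj u v (hold u v huv))
  · rcases huv.cons_cons_cons_cases with ⟨rfl, rfl⟩ | ⟨rfl, rfl⟩ | huv
    · exact hE.subsingleton_of_forall_not fun t ht _ hdt => hd t ht.1 hdt
    · exact hE.subsingleton_of_forall_not fun t ht hdt _ => hd t ht.1 hdt
    · exact hE.subsingleton_of_not_and_mem (h.subsingleton u v (hold u v huv))
        (hT ▸ not_and_mem_of_pair_infix hpath hrest huv hdpath)
  · rcases hpv.cons_cons_cons_pair_cases hN hvq with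
      ⟨hp, hv, hq⟩ | ⟨hp, hv, h₂⟩ | ⟨hv, hq, h₁⟩ | ⟨h₁, h₂⟩
    · subst p v q
      exact hE.hasFan_concat (hasFan_self_of_forall_notMem hd a) (by ext; simp; tauto)
    · subst p v
      exact hE.hasFan_cons (h.hasFan a b q hab' (hold _ _ h₂)) (by ext; simp; tauto)
    · subst v q
      exact hE.hasFan_concat (h.hasFan p a b (hold _ _ h₁) hab') rfl
    · exact hE.hasFan_of_notMem (h.hasFan p v q (hold _ _ h₁) (hold _ _ h₂))
        (hT ▸ notMem_of_pair_infix_of_pair_infix hpath h₁ h₂ hdpath)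

theorem isTriangleExtension_glue_edge {a b c : V} (hab : a ≠ b) (hac : a ≠ c) (hbc : b ≠ c)
    (hTF : ({a, b, c} : Finset V) ∉ F) :
    IsTriangleExtension F (F ∪ {{a, c}, {a, b, c}}) {a, b, c} := by
  refine isTriangleExtension_union ?_ (by simp)
    (Finset.card_eq_three.2 ⟨a, b, c, hab, hac, hbc, rfl⟩) hTF
  simp only [Finset.mem_insert, Finset.mem_singleton]
  rintro s (rfl | rfl) h3 <;> simp_all

theorem IsBoundaryCycle.glue_edge {a b c : V} {rest : List V}
    (h : IsBoundaryCycle F (a :: b :: c :: rest)) (hne : rest ≠ []) (hac : a ≠ c)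
    (hacF : ({a, c} : Finset V) ∉ F) :
    IsBoundaryCycle (F ∪ {{a, c}, {a, b, c}}) (a :: c :: rest) := by
  set F' : Finset (Finset V) := F ∪ {{a, c}, {a, b, c}}
  have hab' : IsCyclicSucc (a :: b :: c :: rest) a b :=
    isCyclicSucc_cons_cons_iff.2 (Or.inl ⟨rfl, rfl⟩)
  have hbc' : IsCyclicSucc (a :: b :: c :: rest) b c :=
    .of_infix (List.infix_cons (List.prefix_append [b, c] rest).isInfix)
  have hab : a ≠ b := (h.adj a b hab').1
  have hbc : b ≠ c := (h.adj b c hbc').1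
  have hE : IsTriangleExtension F F' {a, b, c} := by
    refine isTriangleExtension_glue_edge hab hac hbc fun hT => hacF ?_
    exact h.pair_mem _ ⟨hT, Finset.card_eq_three.2 ⟨a, b, c, hab, hac, hbc, rfl⟩⟩ a (by simp) c
      (by simp) hac
  have hsub : (a :: c :: rest).Sublist (a :: b :: c :: rest) :=
    (List.sublist_cons_self b _).cons_cons a
  have hpath : (c :: rest ++ [a]).Nodup :=
    ((List.IsRotated.cons_append_singleton (a := a) (l := b :: c :: rest)).nodup_iff.1
      h.nodup).sublist (List.sublist_cons_self b _)
  have hbpath : b ∉ c :: rest ++ [a] := by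
    have hnd := h.nodup
    simp at hnd ⊢
    tauto
  have hold : ∀ u v, [u, v] <:+: c :: rest ++ [a] → IsCyclicSucc (a :: b :: c :: rest) u v :=
    fun u v huv => isCyclicSucc_cons_cons_iff.2 (Or.inr (List.infix_cons huv))
  have hT : ({a, b, c} : Finset V) = {c, a, b} := by ext; simp; tauto
  refine ⟨h.nodup.sublist hsub, by simpa [Nat.one_le_iff_ne_zero] using hne,
    fun v hv => verts_mono hE.subset (h.subset_verts v (hsub.subset hv)), fun t ht => ?_,
    fun u v huv => ?_, fun u v huv => ?_, fun p v q hpv hvq => ?_⟩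
  · rcases (hE.isTriangle_iff t).1 ht with ht | rfl
    · exact fun x hx y hy hxy => hE.subset (h.pair_mem t ht x hx y hy hxy)
    · exact pair_mem_of_mem_triple (hE.subset (h.adj a b hab').2) (by simp [F'])
        (hE.subset (h.adj b c hbc').2)
  · rcases isCyclicSucc_cons_cons_iff.1 huv with ⟨rfl, rfl⟩ | huv
    · exact ⟨hac, by simp [F']⟩
    · exact graphOf_mono hE.subset (h.adj u v (hold u v huv))
  · rcases isCyclicSucc_cons_cons_iff.1 huv with ⟨rfl, rfl⟩ | huv
    · exact hE.subsingleton_of_forall_not fun t ht hat hct =>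
        hacF (h.pair_mem t ht _ hat _ hct hac)
    · exact hE.subsingleton_of_not_and_mem (h.subsingleton u v (hold u v huv))
        (hT ▸ not_and_mem_of_pair_infix hpath hne huv hbpath)
  · rcases hpv.cons_cons_pair_cases hac hvq with ⟨hp, hv, h₂⟩ | ⟨hv, hq, h₁⟩ | ⟨h₁, h₂⟩
    · subst p v
      exact hE.hasFan_cons (h.hasFan b c q hbc' (hold _ _ h₂)) (by ext; simp; tauto)
    · subst v q
      exact hE.hasFan_concat (h.hasFan p a b (hold _ _ h₁) hab') rfl
    · exact hE.hasFan_of_notMem (h.hasFan p v q (hold _ _ h₁) (hold _ _ h₂))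
        (hT ▸ notMem_of_pair_infix_of_pair_infix hpath h₁ h₂ hbpath)

theorem IsDiscWithBoundary.isBoundaryCycle (h : IsDiscWithBoundary F bd) :
    IsBoundaryCycle F bd := by
  induction h with
  | triangle a b c hab hac hbc => exact isBoundaryCycle_triangle hab hac hbc
  | rotate F l₁ l₂ _ ih => exact ih.of_isRotated List.isRotated_append
  | glue_vertex F a b d rest _ hd ih => exact ih.glue_vertex hd
  | glue_edge F a b c rest _ hne hac hacF ih => exact ih.glue_edge hne hac hacF

namespace IsBoundaryCycle

variable {t : Finset V} {p q u v x y : V}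

theorem adj_of_mem (hB : IsBoundaryCycle F bd) (ht : IsTriangle F t) (hx : x ∈ t) (hy : y ∈ t)
    (hxy : x ≠ y) : (graphOf F).Adj x y :=
  ⟨hxy, hB.pair_mem t ht x hx y hy hxy⟩

theorem linkGraph_le (hB : IsBoundaryCycle F bd) (v : V) : linkGraph F v ≤ graphOf F :=
  fun x y h => hB.adj_of_mem (x := x) (y := y) h (by simp) (by simp) ((linkGraph F v).ne_of_adj h)

theorem apex_unique (hB : IsBoundaryCycle F bd) (huv : IsCyclicSucc bd u v)
    (hx : IsTriangle F {u, v, x}) (hy : IsTriangle F {u, v, y}) : x = y := by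
  have hxy : ({u, v, x} : Finset V) = {u, v, y} :=
    hB.subsingleton u v huv ⟨hx, by simp, by simp⟩ ⟨hy, by simp, by simp⟩
  have hmem : x ∈ ({u, v, y} : Finset V) := hxy ▸ by simp
  obtain ⟨-, hux, hvx⟩ := ne_of_card_eq_three hx.2
  simp only [Finset.mem_insert, Finset.mem_singleton] at hmem
  tauto

theorem exists_walk_across_fan (hB : IsBoundaryCycle F bd) (hpv : IsCyclicSucc bd p v)
    (hvq : IsCyclicSucc bd v q) (hv : 2 ≤ angle F v) :
    ∃ u z, IsTriangle F {p, v, u} ∧ IsTriangle F {v, q, z} ∧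
      ∃ w : (graphOf F).Walk u z, w.length + 2 = angle F v := by
  obtain ⟨w, hw⟩ := hB.hasFan p v q hpv hvq
  obtain ⟨u, z, hu, hz, w', hw'⟩ := w.exists_adj_adj_of_two_le_length (hw ▸ hv)
  refine ⟨u, z, ?_, ?_, w'.mapLe (hB.linkGraph_le v), by simp [hw', hw]⟩
  · rwa [Finset.insert_comm]
  · rwa [linkGraph_adj, Finset.pair_comm] at hz

variable {α : ℕ → V} {n : ℕ}

theorem two_le_angle (hB : IsBoundaryCycle F bd) (hα : (List.range (n + 1)).map α <+: bd)
    (hgeo : (graphOf F).dist (α 0) (α n) = n) {j : ℕ} (hj₀ : 0 < j) (hjn : j < n) :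
    2 ≤ angle F (α j) := by
  obtain ⟨i, rfl⟩ : ∃ i, j = i + 1 := ⟨j - 1, by omega⟩
  by_contra! hlt
  have hadj : ∀ k < n, (graphOf F).Adj (α k) (α (k + 1)) := fun k hk =>
    hB.adj _ _ (isCyclicSucc_of_map_range_prefix hα hk)
  obtain ⟨w, hw⟩ := hB.hasFan _ _ _ (isCyclicSucc_of_map_range_prefix hα (i := i) (by omega))
    (isCyclicSucc_of_map_range_prefix hα hjn)
  obtain ⟨w₁, hw₁⟩ := SimpleGraph.exists_walk_of_adj_succ hadj (Nat.zero_le i) (by omega)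
  obtain ⟨w₂, hw₂⟩ :=
    SimpleGraph.exists_walk_of_adj_succ hadj (i := i + 2) (j := n) (by omega) le_rfl
  have := hgeo ▸ SimpleGraph.dist_le (w₁.append ((w.mapLe (hB.linkGraph_le _)).append w₂))
  simp only [SimpleGraph.Walk.length_append, SimpleGraph.Walk.length_mapLe] at this
  omega

theorem exists_apex_walk (hB : IsBoundaryCycle F bd) (hα : (List.range (n + 1)).map α <+: bd)
    (hn : 2 ≤ n) (hang : ∀ i, 0 < i → i < n → 2 ≤ angle F (α i)) {j : ℕ} (hj : j < n) :
    ∃ y, IsTriangle F {α j, α (j + 1), y} ∧ ∃ w : (graphOf F).Walk (α 0) y,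
      (w.length : ℤ) ≤ 1 + ∑ i ∈ Finset.Ico 1 (j + 1), ((angle F (α i) : ℤ) - 2) := by
  have hsucc : ∀ k < n, IsCyclicSucc bd (α k) (α (k + 1)) := fun k hk =>
    isCyclicSucc_of_map_range_prefix hα hk
  induction j with
  | zero =>
    obtain ⟨u, -, hu, -, -⟩ :=
      hB.exists_walk_across_fan (hsucc 0 (by omega)) (hsucc 1 hn) (hang 1 one_pos hn)
    have hadj := hB.adj_of_mem hu (by simp) (by simp) (ne_of_card_eq_three hu.2).2.1
    exact ⟨u, hu, .cons hadj .nil, by simp⟩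
  | succ j ih =>
    obtain ⟨y, hy, w, hw⟩ := ih (by omega)
    obtain ⟨u, z, hu, hz, w', hw'⟩ := hB.exists_walk_across_fan (hsucc j (by omega))
      (hsucc (j + 1) hj) (hang (j + 1) (by omega) hj)
    obtain rfl := hB.apex_unique (hsucc j (by omega)) hy hu
    refine ⟨z, hz, w.append w', ?_⟩
    rw [Finset.sum_Ico_succ_top (by omega), SimpleGraph.Walk.length_append]
    push_cast
    omega

end IsBoundaryCycle

end BoundaryCycle

end ASC

/-- For a geodesic `α` contained in the boundary of a triangulated 2-disc, the sum of the
boundary curvatures `3 − ∠(v)` over the interior vertices of `α` is at most `1`. -/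
theorem boundary_geodesic_curvature {V : Type u} [DecidableEq V]
    (F : Finset (Finset V)) (bd : List V) (hD : ASC.IsDiscWithBoundary F bd)
    (α : ℕ → V) (n : ℕ) (hα : ((List.range (n + 1)).map α) <+: bd)
    (hgeo : (ASC.graphOf F).dist (α 0) (α n) = n) :
    ∑ i ∈ Finset.Ioo 0 n, ((3 : ℤ) - ASC.angle F (α i)) ≤ 1 := by
  have hB := hD.isBoundaryCycle
  have hsum : ∑ i ∈ Finset.Ioo 0 n, ((3 : ℤ) - ASC.angle F (α i)) =
      ∑ i ∈ Finset.Ico 1 n, (1 - ((ASC.angle F (α i) : ℤ) - 2)) := by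
    rw [← Finset.Ico_add_one_left_eq_Ioo]
    exact Finset.sum_congr rfl fun _ _ => by ring
  rw [hsum, Finset.sum_sub_distrib, Finset.sum_const, Nat.card_Ico, nsmul_eq_mul, mul_one]
  rcases Nat.lt_or_ge n 2 with hn | hn
  · simp [Finset.Ico_eq_empty_of_le (by omega : n ≤ 1)]
    omega
  obtain ⟨y, hy, w, hw⟩ := hB.exists_apex_walk hα hn (fun _ => hB.two_le_angle hα hgeo)
    (j := n - 1) (by omega)
  rw [Nat.sub_add_cancel (by omega : 1 ≤ n)] at hy hw
  have hyn := hB.adj_of_mem hy (by simp) (by simp) (ASC.ne_of_card_eq_three hy.2).2.2.symm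
  have hlen := hgeo ▸ SimpleGraph.dist_le (w.concat hyn)
  rw [SimpleGraph.Walk.length_concat] at hlen
  push_cast [Nat.cast_sub (by omega : 1 ≤ n)]
  omega
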